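/- Let 1 ≤ p < ∞ and β > 0. If there exists a constant C > 0 such that for every n ≥ 1 and every function f : Ω_n → ℂ one has ‖ |∇f| ‖_p ≤ C ‖Δ^β f‖_p, then β ≥ 1/p. -/

import Mathlib

open Real Finset

namespace DiscreteCube

variable {n : ℕ}

/-- The point of the cube `{-1,1}^n` encoded by `x : Fin n → Bool`:
coordinate `j` is `1` if `x j = true` and `-1` otherwise. -/
def sgn (b : Bool) : ℂ := if b then 1 else -1

/-- Negate the `j`-th coordinate. -/
def flip (j : Fin n) (x : Fin n → Bool) : Fin n → Bool :=
  Function.update x j (!(x j))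

/-- Discrete partial derivative `(∂_j f)(x) = f(x) - f(x e_j)`. -/
def pd (j : Fin n) (f : (Fin n → Bool) → ℂ) (x : Fin n → Bool) : ℂ :=
  f x - f (flip j x)

/-- Length of the discrete gradient, `|∇f|(x) = (Σ_j |(∂_j f)(x)|²)^{1/2}`. -/
noncomputable def gradLen (f : (Fin n → Bool) → ℂ) (x : Fin n → Bool) : ℝ :=
  Real.sqrt (∑ j : Fin n, ‖pd j f x‖ ^ 2)

/-- Expectation with respect to the uniform probability on the cube. -/
noncomputable def expect (f : (Fin n → Bool) → ℂ) : ℂ :=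
  (∑ x : Fin n → Bool, f x) / 2 ^ n

/-- `L^p` norm (`1 ≤ p < ∞`) of a complex-valued function on the cube. -/
noncomputable def cLp (p : ℝ) (f : (Fin n → Bool) → ℂ) : ℝ :=
  ((∑ x : Fin n → Bool, ‖f x‖ ^ p) / 2 ^ n) ^ (1 / p)

/-- `L^p` norm (`1 ≤ p < ∞`) of a real-valued function on the cube. -/
noncomputable def rLp (p : ℝ) (g : (Fin n → Bool) → ℝ) : ℝ :=
  ((∑ x : Fin n → Bool, |g x| ^ p) / 2 ^ n) ^ (1 / p)

end DiscreteCube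

namespace DiscreteCube

variable {n : ℕ}

/-- Walsh function `ω_A(x) = ∏_{j∈A} x_j`. -/
def walsh (A : Finset (Fin n)) (x : Fin n → Bool) : ℂ := ∏ j ∈ A, sgn (x j)

/-- Walsh–Fourier coefficient `f̂(A) = 𝔼[f·ω_A]`. -/
noncomputable def coeff (f : (Fin n → Bool) → ℂ) (A : Finset (Fin n)) : ℂ :=
  (∑ x : Fin n → Bool, f x * walsh A x) / 2 ^ n

/-- The operator `cos^{Δ/4}θ`:
`cos^{Δ/4}θ(f) = Σ_A cos^{|A|}θ · f̂(A) ω_A` (the `A = ∅` term is `f̂(∅)`). -/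
noncomputable def cosD (θ : ℝ) (f : (Fin n → Bool) → ℂ) (x : Fin n → Bool) : ℂ :=
  ∑ A : Finset (Fin n), (Real.cos θ : ℂ) ^ A.card * coeff f A * walsh A x

/-- Fractional power of the discrete Laplacian, `Δ^β f = Σ_{A≠∅} (4|A|)^β f̂(A) ω_A`
(for `β > 0` the `A = ∅` term vanishes since `0^β = 0`). -/
noncomputable def deltaPow (β : ℝ) (f : (Fin n → Bool) → ℂ) (x : Fin n → Bool) : ℂ :=
  ∑ A : Finset (Fin n), (((4 * (A.card : ℝ)) ^ β : ℝ) : ℂ) * coeff f A * walsh A x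

/-- The constant `K_α = (1/Γ(1−α)) ∫_0^{π/2} (−log cos θ)^{−α} dθ`. -/
noncomputable def Kconst (α : ℝ) : ℝ :=
  (1 / Real.Gamma (1 - α)) * ∫ θ in (0:ℝ)..(Real.pi / 2), (-Real.log (Real.cos θ)) ^ (-α)

/-- The constant `k_β = (1/Γ(β)) ∫_0^{π/2} (−log cos θ)^{β−1} dθ`. -/
noncomputable def kconst (β : ℝ) : ℝ :=
  (1 / Real.Gamma β) * ∫ θ in (0:ℝ)..(Real.pi / 2), (-Real.log (Real.cos θ)) ^ (β - 1)

end DiscreteCube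

open DiscreteCube

/-!
Test the inequality on the indicator `δ` of the vertex `⊤`. Its gradient has length at least `1`
at the `n` neighbours of `⊤`, so `∑ₓ |∇δ|^p ≥ n`. On the other side `|Δ^β δ| ≤ (4n)^β`, and for
`0 < β < 1` the subordination formula `λ^β = c_β ∫₀^∞ (1 - e^{-λt}) t^{-β-1} dt` writes `Δ^β δ`
as a positive mixture over `t` of `δ - P_t δ`, `P_t` the heat semigroup, which is `≤ 0` away
from `⊤`. Since `Δ^β δ` also sums to zero, `∑ₓ |Δ^β δ| ≤ 2 (4n)^β`, hence `∑ₓ |Δ^β δ|^p ≤ 2 (4n)^{βp}`. The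
inequality then gives `n ≤ 2 C^p (4n)^{βp}` for every `n`, which forces `βp ≥ 1`.
-/

section

open Set MeasureTheory

noncomputable def rpowIntegrand (β lam t : ℝ) : ℝ := t ^ (-β - 1) * (1 - exp (-(lam * t)))

variable {β : ℝ}

lemma rpowIntegrand_nonneg {lam t : ℝ} (hlam : 0 ≤ lam) (ht : 0 ≤ t) : 0 ≤ rpowIntegrand β lam t :=
  mul_nonneg (rpow_nonneg ht _) (sub_nonneg.2 (exp_le_one_iff.2 (by nlinarith)))

lemma integrableOn_rpowIntegrand (hβ0 : 0 < β) (hβ1 : β < 1) {lam : ℝ} (hlam : 0 ≤ lam) :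
    IntegrableOn (rpowIntegrand β lam) (Ioi 0) := by
  have hmeas : AEStronglyMeasurable (rpowIntegrand β lam) := by
    unfold rpowIntegrand; fun_prop
  rw [← Ioc_union_Ioi_eq_Ioi zero_le_one]
  refine IntegrableOn.union ?_ ?_
  · refine Integrable.mono' (((intervalIntegrable_iff_integrableOn_Ioc_of_le zero_le_one).1
      (intervalIntegral.intervalIntegrable_rpow' (r := -β) (by linarith))).const_mul lam)
      hmeas.restrict ((ae_restrict_iff' measurableSet_Ioc).2 (.of_forall fun t ht => ?_))
    have hsplit : t ^ (-β) = t ^ (-β - 1) * t := by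
      rw [← rpow_add_one ht.1.ne']; ring_nf
    rw [norm_of_nonneg (rpowIntegrand_nonneg hlam ht.1.le), rpowIntegrand, hsplit]
    nlinarith [one_sub_le_exp_neg (lam * t), rpow_nonneg ht.1.le (-β - 1)]
  · refine Integrable.mono' (integrableOn_Ioi_rpow_of_lt (a := -β - 1) (by linarith) zero_lt_one)
      hmeas.restrict ((ae_restrict_iff' measurableSet_Ioi).2 (.of_forall fun t ht => ?_))
    have ht0 : (0 : ℝ) < t := zero_lt_one.trans ht
    rw [norm_of_nonneg (rpowIntegrand_nonneg hlam ht0.le), rpowIntegrand]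
    nlinarith [exp_nonneg (-(lam * t)), rpow_nonneg ht0.le (-β - 1)]

lemma integral_rpowIntegrand_one_pos (hβ0 : 0 < β) (hβ1 : β < 1) :
    0 < ∫ t in Ioi 0, rpowIntegrand β 1 t := by
  rw [setIntegral_pos_iff_support_of_nonneg_ae
    ((ae_restrict_iff' measurableSet_Ioi).2 (.of_forall fun t ht => rpowIntegrand_nonneg zero_le_one
      (le_of_lt ht))) (integrableOn_rpowIntegrand hβ0 hβ1 zero_le_one)]
  have hsupp : Ioi (0 : ℝ) ⊆ Function.support (rpowIntegrand β 1) ∩ Ioi 0 := fun t ht =>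
    ⟨(mul_pos (rpow_pos_of_pos ht _) (sub_pos.2 (exp_lt_one_iff.2 (by simpa using ht)))).ne',
      ht⟩
  exact (measure_mono hsupp).trans_lt' (by simp)

lemma integral_rpowIntegrand (hβ0 : 0 < β) {lam : ℝ} (hlam : 0 ≤ lam) :
    ∫ t in Ioi 0, rpowIntegrand β lam t = lam ^ β * ∫ t in Ioi 0, rpowIntegrand β 1 t := by
  rcases hlam.eq_or_lt with rfl | hpos
  · simp [rpowIntegrand, zero_rpow hβ0.ne']
  have hscale : ∀ t ∈ Ioi (0 : ℝ),
      rpowIntegrand β lam t = lam ^ (β + 1) * rpowIntegrand β 1 (lam * t) := by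
    intro t ht
    rw [rpowIntegrand, rpowIntegrand, one_mul, mul_rpow hpos.le (le_of_lt ht), ← mul_assoc,
      ← mul_assoc, ← rpow_add hpos, show β + 1 + (-β - 1) = 0 by ring, rpow_zero, one_mul]
  rw [setIntegral_congr_fun measurableSet_Ioi hscale, integral_const_mul,
    integral_comp_mul_left_Ioi (rpowIntegrand β 1) 0 hpos, mul_zero, smul_eq_mul, ← mul_assoc,
    ← rpow_neg_one, ← rpow_add hpos, show β + 1 + -1 = β by ring]

end

lemma Fintype.sum_abs_le_two_mul_abs_of_sum_eq_zero {ι : Type*} [Fintype ι] [DecidableEq ι]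
    {g : ι → ℝ} (hsum : ∑ i, g i = 0) (a : ι) (hg : ∀ i ≠ a, g i ≤ 0) :
    ∑ i, |g i| ≤ 2 * |g a| := by
  have hrest : ∑ i ∈ {a}ᶜ, |g i| = -∑ i ∈ {a}ᶜ, g i := by
    rw [← sum_neg_distrib]
    exact Finset.sum_congr rfl fun i hi => abs_of_nonpos (hg i (by simpa using hi))
  rw [Fintype.sum_eq_add_sum_compl a, hrest]
  rw [Fintype.sum_eq_add_sum_compl a] at hsum
  linarith [le_abs_self (g a)]

lemma Fintype.sum_abs_rpow_le {ι : Type*} [Fintype ι] {g : ι → ℝ} {M p : ℝ} (hp : 1 ≤ p)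
    (hg : ∀ i, |g i| ≤ M) : ∑ i, |g i| ^ p ≤ M ^ (p - 1) * ∑ i, |g i| := by
  rw [Finset.mul_sum]
  refine Finset.sum_le_sum fun i _ => ?_
  calc |g i| ^ p = |g i| ^ (p - 1) * |g i| := by
        rw [← rpow_add_one' (abs_nonneg _) (by linarith), sub_add_cancel]
    _ ≤ M ^ (p - 1) * |g i| := by gcongr; exact hg i

lemma not_forall_natCast_le_mul_rpow {γ : ℝ} (hγ : γ < 1) (K : ℝ) :
    ¬ ∀ n : ℕ, 1 ≤ n → (n : ℝ) ≤ K * (n : ℝ) ^ γ := by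
  intro h
  obtain ⟨n, hnK, hn⟩ := (((tendsto_rpow_atTop (sub_pos.2 hγ)).comp
    tendsto_natCast_atTop_atTop).eventually_gt_atTop K |>.and (Filter.eventually_ge_atTop 1)).exists
  have hn0 : (0 : ℝ) < n := by exact_mod_cast hn
  have hsplit : (n : ℝ) = (n : ℝ) ^ (1 - γ) * (n : ℝ) ^ γ := by
    rw [← rpow_add hn0, sub_add_cancel, rpow_one]
  have hlt : K * (n : ℝ) ^ γ < (n : ℝ) ^ (1 - γ) * (n : ℝ) ^ γ :=
    (mul_lt_mul_iff_left₀ (rpow_pos_of_pos hn0 γ)).2 hnK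
  linarith [h n hn]

namespace DiscreteCube

variable {n : ℕ}

def rsgn (b : Bool) : ℝ := if b then 1 else -1

def rwalsh (A : Finset (Fin n)) (x : Fin n → Bool) : ℝ := ∏ j ∈ A, rsgn (x j)

lemma walsh_eq_rwalsh (A : Finset (Fin n)) (x : Fin n → Bool) : walsh A x = rwalsh A x := by
  rw [walsh, rwalsh, Complex.ofReal_prod]
  refine prod_congr rfl fun j _ => ?_
  cases x j <;> simp [sgn, rsgn]

lemma abs_rwalsh (A : Finset (Fin n)) (x : Fin n → Bool) : |rwalsh A x| = 1 := by
  rw [rwalsh, abs_prod]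
  exact prod_eq_one fun j _ => by cases x j <;> simp [rsgn]

@[simp]
lemma rwalsh_top (A : Finset (Fin n)) : rwalsh A ⊤ = 1 := by
  simp [rwalsh, rsgn]

lemma sum_pow_card_mul_rwalsh (r : ℝ) (x : Fin n → Bool) :
    ∑ A : Finset (Fin n), r ^ A.card * rwalsh A x = ∏ j, (1 + r * rsgn (x j)) := by
  rw [prod_one_add, powerset_univ]
  refine sum_congr rfl fun A _ => ?_
  rw [rwalsh, prod_mul_distrib, prod_const]

lemma sum_rwalsh_eq_zero {A : Finset (Fin n)} (hA : A.Nonempty) :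
    ∑ x : Fin n → Bool, rwalsh A x = 0 := by
  obtain ⟨j, hj⟩ := hA
  have hprod : ∀ x : Fin n → Bool, rwalsh A x = ∏ i, if i ∈ A then rsgn (x i) else 1 := fun x => by
    rw [rwalsh, prod_ite_mem, univ_inter]
  simp_rw [hprod]
  rw [← Fintype.prod_sum (fun i b => if i ∈ A then rsgn b else 1)]
  exact prod_eq_zero (mem_univ j) (by simp [hj, rsgn])

lemma prod_one_add_rsgn_eq_zero {x : Fin n → Bool} (hx : x ≠ ⊤) :
    ∏ j, (1 + rsgn (x j)) = 0 := by
  obtain ⟨j, hj⟩ : ∃ j, x j = false := by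
    by_contra! h
    exact hx (funext fun j => by simpa using h j)
  exact prod_eq_zero (mem_univ j) (by simp [hj, rsgn])

lemma prod_one_add_mul_rsgn_nonneg {r : ℝ} (hr : |r| ≤ 1) (x : Fin n → Bool) :
    0 ≤ ∏ j, (1 + r * rsgn (x j)) :=
  prod_nonneg fun j _ => by cases x j <;> simp [rsgn] <;> linarith [abs_le.1 hr]

lemma sum_rwalsh_mul_one_sub_pow_nonpos {x : Fin n → Bool} (hx : x ≠ ⊤) {r : ℝ} (hr : |r| ≤ 1) :
    ∑ A : Finset (Fin n), rwalsh A x * (1 - r ^ A.card) ≤ 0 := by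
  calc ∑ A : Finset (Fin n), rwalsh A x * (1 - r ^ A.card)
      = ∑ A : Finset (Fin n), 1 ^ A.card * rwalsh A x
          - ∑ A : Finset (Fin n), r ^ A.card * rwalsh A x := by
        rw [← sum_sub_distrib]
        exact sum_congr rfl fun A _ => by ring
    _ = -∏ j, (1 + r * rsgn (x j)) := by
        rw [sum_pow_card_mul_rwalsh, sum_pow_card_mul_rwalsh]
        simp only [one_mul, prod_one_add_rsgn_eq_zero hx, zero_sub]
    _ ≤ 0 := neg_nonpos.2 (prod_one_add_mul_rsgn_nonneg hr x)

noncomputable def deltaPowKernel (β : ℝ) (x : Fin n → Bool) : ℝ :=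
  ∑ A : Finset (Fin n), (4 * (A.card : ℝ)) ^ β * rwalsh A x / 2 ^ n

lemma deltaPow_single_top (β : ℝ) (x : Fin n → Bool) :
    deltaPow β (Pi.single ⊤ 1) x = deltaPowKernel β x := by
  have hcoeff : ∀ A, coeff (Pi.single (⊤ : Fin n → Bool) (1 : ℂ)) A = 1 / 2 ^ n := fun A => by
    simp [coeff, Pi.single_apply, walsh_eq_rwalsh]
  simp only [deltaPow, deltaPowKernel, hcoeff, walsh_eq_rwalsh, Complex.ofReal_sum,
    Complex.ofReal_div, Complex.ofReal_mul, Complex.ofReal_pow, Complex.ofReal_ofNat]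
  exact sum_congr rfl fun A _ => by ring

lemma abs_deltaPowKernel_le {β : ℝ} (hβ : 0 ≤ β) (x : Fin n → Bool) :
    |deltaPowKernel β x| ≤ (4 * (n : ℝ)) ^ β := by
  calc |deltaPowKernel β x|
      ≤ ∑ A : Finset (Fin n), |(4 * (A.card : ℝ)) ^ β * rwalsh A x / 2 ^ n| :=
        abs_sum_le_sum_abs _ _
    _ ≤ ∑ _A : Finset (Fin n), (4 * (n : ℝ)) ^ β / 2 ^ n := by
      refine sum_le_sum fun A _ => ?_
      rw [abs_div, abs_mul, abs_rwalsh, mul_one, abs_of_nonneg (by positivity),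
        abs_of_nonneg (by positivity)]
      gcongr
      exact_mod_cast card_le_univ A |>.trans_eq (Fintype.card_fin n)
    _ = (4 * (n : ℝ)) ^ β := by
      rw [sum_const, card_univ, Fintype.card_finset, Fintype.card_fin, nsmul_eq_mul]
      push_cast
      field_simp

lemma sum_deltaPowKernel {β : ℝ} (hβ : β ≠ 0) :
    ∑ x : Fin n → Bool, deltaPowKernel β x = 0 := by
  unfold deltaPowKernel
  rw [sum_comm]
  refine sum_eq_zero fun A _ => ?_
  rcases A.eq_empty_or_nonempty with rfl | hA
  · simp [zero_rpow hβ]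
  · rw [← sum_div, ← mul_sum, sum_rwalsh_eq_zero hA, mul_zero, zero_div]

open Set MeasureTheory in
lemma deltaPowKernel_nonpos {β : ℝ} (hβ0 : 0 < β) (hβ1 : β < 1) {x : Fin n → Bool}
    (hx : x ≠ ⊤) : deltaPowKernel β x ≤ 0 := by
  have hint : ∀ A : Finset (Fin n), IntegrableOn (rpowIntegrand β (4 * A.card)) (Ioi 0) := fun A =>
    integrableOn_rpowIntegrand hβ0 hβ1 (by positivity)
  have hrepr : deltaPowKernel β x * ∫ t in Ioi 0, rpowIntegrand β 1 t
      = ∫ t in Ioi 0,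
          ∑ A : Finset (Fin n), rwalsh A x / 2 ^ n * rpowIntegrand β (4 * A.card) t := by
    rw [integral_finsetSum _ fun A _ => (hint A).const_mul _, deltaPowKernel, sum_mul]
    refine sum_congr rfl fun A _ => ?_
    rw [integral_const_mul, integral_rpowIntegrand hβ0 (lam := 4 * A.card) (by positivity)]
    ring
  refine nonpos_of_mul_nonpos_left (hrepr ▸ setIntegral_nonpos measurableSet_Ioi fun t ht => ?_)
    (integral_rpowIntegrand_one_pos hβ0 hβ1)
  have hexp : ∀ A : Finset (Fin n), exp (-(4 * A.card * t)) = exp (-(4 * t)) ^ A.card := fun A => by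
    rw [← exp_nat_mul]; ring_nf
  have hsum : ∑ A : Finset (Fin n), rwalsh A x / 2 ^ n * rpowIntegrand β (4 * A.card) t
      = t ^ (-β - 1) / 2 ^ n *
          ∑ A : Finset (Fin n), rwalsh A x * (1 - exp (-(4 * t)) ^ A.card) := by
    rw [mul_sum]
    exact sum_congr rfl fun A _ => by rw [rpowIntegrand, hexp]; ring
  rw [hsum]
  refine mul_nonpos_of_nonneg_of_nonpos (div_nonneg (rpow_nonneg (le_of_lt ht) _) (by positivity))
    (sum_rwalsh_mul_one_sub_pow_nonpos hx ?_)
  rw [abs_of_pos (exp_pos _)]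
  exact exp_le_one_iff.2 (by linarith [show (0:ℝ) < t from ht])

lemma sum_abs_rpow_deltaPowKernel_le {β p : ℝ} (hβ0 : 0 < β) (hβ1 : β < 1) (hp : 1 ≤ p) :
    ∑ x : Fin n → Bool, |deltaPowKernel β x| ^ p ≤ 2 * (4 * (n : ℝ)) ^ (β * p) := by
  have hL1 : ∑ x : Fin n → Bool, |deltaPowKernel β x| ≤ 2 * (4 * (n : ℝ)) ^ β :=
    (Fintype.sum_abs_le_two_mul_abs_of_sum_eq_zero (sum_deltaPowKernel hβ0.ne') ⊤
      fun x hx => deltaPowKernel_nonpos hβ0 hβ1 hx).trans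
      (by gcongr; exact abs_deltaPowKernel_le hβ0.le ⊤)
  calc ∑ x : Fin n → Bool, |deltaPowKernel β x| ^ p
      ≤ ((4 * (n : ℝ)) ^ β) ^ (p - 1) * (2 * (4 * (n : ℝ)) ^ β) :=
        (Fintype.sum_abs_rpow_le hp (abs_deltaPowKernel_le hβ0.le)).trans (by gcongr)
    _ = 2 * (4 * (n : ℝ)) ^ (β * p) := by
        rw [← rpow_mul (by positivity), mul_left_comm, ← rpow_add' (by positivity) (by nlinarith),
          mul_sub, mul_one, sub_add_cancel]

lemma flip_flip (j : Fin n) (x : Fin n → Bool) : flip j (flip j x) = x := by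
  simp [flip]

lemma flip_top_ne_top (j : Fin n) : flip j (⊤ : Fin n → Bool) ≠ ⊤ := fun h => by
  simpa [flip] using congrFun h j

lemma flip_top_injective : Function.Injective fun j : Fin n => flip j (⊤ : Fin n → Bool) := by
  intro i j hij
  by_contra hne
  simpa [flip, Function.update_of_ne hne] using congrFun hij i

lemma one_le_gradLen_single_top (j : Fin n) :
    1 ≤ gradLen (Pi.single ⊤ 1) (flip j (⊤ : Fin n → Bool)) := by
  rw [gradLen, one_le_sqrt]
  refine le_trans (le_of_eq ?_) (single_le_sum (fun i _ => sq_nonneg _) (mem_univ j))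
  simp [pd, flip_flip, flip_top_ne_top]

lemma natCast_le_sum_rpow_gradLen_single_top {p : ℝ} (hp : 0 ≤ p) :
    (n : ℝ) ≤ ∑ x : Fin n → Bool, |gradLen (Pi.single ⊤ 1) x| ^ p := by
  calc (n : ℝ) = ∑ _j : Fin n, 1 := by simp
    _ ≤ ∑ j : Fin n, |gradLen (Pi.single ⊤ 1) (flip j ⊤)| ^ p :=
        sum_le_sum fun j _ => one_le_rpow ((one_le_gradLen_single_top j).trans (le_abs_self _)) hp
    _ = ∑ x ∈ univ.image fun j : Fin n => flip j ⊤, |gradLen (Pi.single ⊤ 1) x| ^ p :=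
        (sum_image (f := fun x => |gradLen (Pi.single ⊤ 1) x| ^ p)
          fun i _ j _ h => flip_top_injective h).symm
    _ ≤ ∑ x : Fin n → Bool, |gradLen (Pi.single ⊤ 1) x| ^ p :=
        sum_le_sum_of_subset_of_nonneg (subset_univ _) fun x _ _ => by positivity

lemma sum_rpow_le_of_rLp_le {p C : ℝ} (hp : 0 < p) (hC : 0 ≤ C) {g : (Fin n → Bool) → ℝ}
    {f : (Fin n → Bool) → ℂ} (h : rLp p g ≤ C * cLp p f) :
    ∑ x, |g x| ^ p ≤ C ^ p * ∑ x, ‖f x‖ ^ p := by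
  have hpow : ∀ u : ℝ, 0 ≤ u → (u ^ (1 / p)) ^ p = u := fun u hu => by
    rw [← rpow_mul hu, one_div_mul_cancel hp.ne', rpow_one]
  have h' := rpow_le_rpow (by unfold rLp; positivity) h hp.le
  rw [rLp, cLp, mul_rpow hC (by positivity), hpow _ (by positivity), hpow _ (by positivity),
    ← mul_div_assoc, div_le_div_iff_of_pos_right (by positivity)] at h'
  exact h'

end DiscreteCube

open DiscreteCube

/-- **(Naor–Schechtman).** Let `1 ≤ p < ∞` and `β > 0`. If there is a constant `C > 0`
such that `‖ |∇f| ‖_p ≤ C ‖Δ^β f‖_p` for every `n ≥ 1` and every `f : Ω_n → ℂ`,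
then `β ≥ 1/p`. -/
theorem cube_reverse_inequality_forces_beta (p : ℝ) (hp : 1 ≤ p) (β : ℝ) (hβ : 0 < β)
    (C : ℝ) (hC : 0 < C)
    (h : ∀ (n : ℕ), 1 ≤ n → ∀ f : (Fin n → Bool) → ℂ,
      rLp p (gradLen f) ≤ C * cLp p (deltaPow β f)) :
    1 / p ≤ β := by
  by_contra! hlt
  have hp0 : 0 < p := by linarith
  have hβ1 : β < 1 := hlt.trans_le ((div_le_one hp0).2 hp)
  refine not_forall_natCast_le_mul_rpow ((lt_div_iff₀ hp0).1 hlt) (2 * C ^ p * 4 ^ (β * p))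
    fun n hn => ?_
  calc (n : ℝ) ≤ ∑ x : Fin n → Bool, |gradLen (Pi.single ⊤ 1) x| ^ p :=
        natCast_le_sum_rpow_gradLen_single_top hp0.le
    _ ≤ C ^ p * ∑ x, ‖deltaPow β (Pi.single ⊤ 1) x‖ ^ p :=
        sum_rpow_le_of_rLp_le hp0 hC.le (h n hn _)
    _ ≤ C ^ p * (2 * (4 * (n : ℝ)) ^ (β * p)) := by
        simp only [deltaPow_single_top, Complex.norm_real, norm_eq_abs]
        gcongr
        exact sum_abs_rpow_deltaPowKernel_le hβ hβ1 hp
    _ = 2 * C ^ p * 4 ^ (β * p) * (n : ℝ) ^ (β * p) := by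
        rw [mul_rpow (by norm_num) (by positivity)]
        ring
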